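/- arXiv:2004.04274 — 7 statements merged into one kernel-verified Lean document; each statement's English description precedes it below -/
import Mathlib

section
/- Let E be a complex normed vector space, let L ≥ 1 be an integer, and let λ ∈ ℂ satisfy λ^L = −1. Let (δ_k)_{k≥0} be a sequence in E and D, E' ≥ 0 be such that ‖δ_k‖ ≤ D for all k, and ‖δ_k − δ_{k−L}‖ ≤ E' for all k ≥ L. Then for every n ≥ 0, ‖∑_{k=0}^{n} λ^{n−k} δ_k‖ ≤ L·D + (n+1)·E'. (Consequently, if n·h ≤ T, D = c·h^{ν} and E' = c·h^{ν+1}, the sum is of size O(h^{ν}).) -/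
/-!
Since `λ ^ L = -1` we have `λ ^ (n - k + L) = -λ ^ (n - k)`, so shifting the sum
`S = ∑_{k ≤ n} λ^(n-k) • δ k` by `L` indices reproduces `-S` up to `L` boundary terms at each end.
Hence `2 • S` is a sum of at most `2L` terms `λ^j • δ k`, each of norm at most `D`, plus the
differences `λ^(n-k) • (δ k - δ (k - L))`, each of norm at most `E'`.
-/

open Finset

theorem norm_eq_one_of_pow_eq_neg_one {𝕜 : Type*} [NormedDivisionRing 𝕜] {x : 𝕜} {L : ℕ}
    (hL : L ≠ 0) (h : x ^ L = -1) : ‖x‖ = 1 := by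
  have hpow : ‖x‖ ^ L = 1 := by rw [← norm_pow, h, norm_neg, norm_one]
  exact (pow_eq_one_iff_of_nonneg (norm_nonneg x) hL).1 hpow

theorem norm_sum_pow_smul_le_card_mul {𝕜 E ι : Type*} [NormedField 𝕜] [SeminormedAddCommGroup E]
    [NormedSpace 𝕜 E] {lam : 𝕜} (hlam : ‖lam‖ = 1) (s : Finset ι) (e : ι → ℕ) (v : ι → E)
    {C : ℝ} (hv : ∀ i ∈ s, ‖v i‖ ≤ C) : ‖∑ i ∈ s, lam ^ e i • v i‖ ≤ #s * C := by
  calc ‖∑ i ∈ s, lam ^ e i • v i‖ ≤ ∑ _i ∈ s, C :=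
        norm_sum_le_of_le s fun i hi => by
          rw [norm_smul, norm_pow, hlam, one_pow, one_mul]
          exact hv i hi
    _ = #s * C := by rw [sum_const, nsmul_eq_mul]

theorem sum_pow_smul_add_self_of_pow_eq_neg_one {R E : Type*} [Ring R] [AddCommGroup E]
    [Module R E] {lam : R} {L : ℕ} (hlam : lam ^ L = -1) (δ : ℕ → E) {n : ℕ} (hLn : L ≤ n) :
    ∑ k ∈ range (n + 1), lam ^ (n - k) • δ k + ∑ k ∈ range (n + 1), lam ^ (n - k) • δ k =
      ∑ k ∈ range L, lam ^ (n - k) • δ k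
        + ∑ k ∈ Ico L (n + 1), lam ^ (n - k) • (δ k - δ (k - L))
        + ∑ k ∈ Ico (n + 1 - L) (n + 1), lam ^ (n - k) • δ k := by
  have hshift : ∑ k ∈ Ico L (n + 1), lam ^ (n - k) • δ (k - L) =
      -∑ k ∈ range (n + 1 - L), lam ^ (n - k) • δ k := by
    rw [sum_Ico_eq_sum_range, ← sum_neg_distrib]
    refine sum_congr rfl fun k hk => ?_
    have hexp : n - k = L + (n - (L + k)) := by have := mem_range.1 hk; omega
    rw [L.add_sub_cancel_left, hexp, pow_add, hlam, neg_one_mul, neg_smul, neg_neg]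
  have hhead := sum_range_add_sum_Ico (fun k => lam ^ (n - k) • δ k) (by omega : L ≤ n + 1)
  have htail := sum_range_add_sum_Ico (fun k => lam ^ (n - k) • δ k) (by omega : n + 1 - L ≤ n + 1)
  simp only [smul_sub, sum_sub_distrib, hshift]
  nth_rewrite 1 [← hhead]
  rw [← htail]
  abel

theorem accumulation_root_of_neg_one_general
    {E : Type*} [NormedAddCommGroup E] [NormedSpace ℂ E]
    (L : ℕ) (lam : ℂ) (hlam : lam ^ L = -1)
    (δ : ℕ → E) (D E' : ℝ)
    (hδ : ∀ k, ‖δ k‖ ≤ D)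
    (hdiff : ∀ k, L ≤ k → ‖δ k - δ (k - L)‖ ≤ E') :
    ∀ n : ℕ, ‖∑ k ∈ Finset.range (n + 1), lam ^ (n - k) • δ k‖
      ≤ (L : ℝ) * D + (n + 1 : ℝ) * E' := by
  intro n
  have hL : L ≠ 0 := by rintro rfl; norm_num at hlam
  have hnorm := norm_eq_one_of_pow_eq_neg_one hL hlam
  have hD : 0 ≤ D := (norm_nonneg _).trans (hδ 0)
  have hE' : 0 ≤ E' := (norm_nonneg _).trans (hdiff L le_rfl)
  rcases lt_or_ge n L with hnL | hLn
  · have hS := norm_sum_pow_smul_le_card_mul hnorm (range (n + 1)) (n - ·) δ fun k _ => hδ k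
    have hn : (n + 1 : ℝ) ≤ L := by exact_mod_cast hnL
    rw [card_range, Nat.cast_succ] at hS
    nlinarith
  · have h2S := congrArg norm (sum_pow_smul_add_self_of_pow_eq_neg_one hlam δ hLn)
    have hhead := norm_sum_pow_smul_le_card_mul hnorm (range L) (n - ·) δ fun k _ => hδ k
    have hdiffs := norm_sum_pow_smul_le_card_mul hnorm (Ico L (n + 1)) (n - ·) _
      fun k hk => hdiff k (mem_Ico.1 hk).1
    have htail := norm_sum_pow_smul_le_card_mul hnorm (Ico (n + 1 - L) (n + 1)) (n - ·) δ
      fun k _ => hδ k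
    rw [← two_smul ℝ, norm_smul, Real.norm_two] at h2S
    rw [card_range] at hhead
    rw [Nat.card_Ico, show n + 1 - (n + 1 - L) = L by omega] at htail
    have hcard : ((#(Ico L (n + 1)) : ℕ) : ℝ) ≤ n + 1 := by
      rw [Nat.card_Ico]; exact_mod_cast Nat.sub_le _ _
    have hsum := h2S.trans_le norm_add₃_le
    nlinarith

/-- **Accumulation of errors, root-of-−1 eigenvalue case.**
Let `E` be a complex normed vector space, `L ≥ 1` an integer and `λ ∈ ℂ` with `λ ^ L = -1`.
If `‖δ k‖ ≤ D` for all `k` and `‖δ k - δ (k - L)‖ ≤ E'` for all `k ≥ L`, then for every `n`,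
`‖∑_{k=0}^{n} λ^(n-k) • δ k‖ ≤ L * D + (n + 1) * E'`. -/
theorem accumulation_root_of_neg_one
    {E : Type*} [NormedAddCommGroup E] [NormedSpace ℂ E]
    (L : ℕ) (hL : 1 ≤ L) (lam : ℂ) (hlam : lam ^ L = -1)
    (δ : ℕ → E) (D E' : ℝ) (hD : 0 ≤ D) (hE' : 0 ≤ E')
    (hδ : ∀ k, ‖δ k‖ ≤ D)
    (hdiff : ∀ k, L ≤ k → ‖δ k - δ (k - L)‖ ≤ E') :
    ∀ n : ℕ, ‖∑ k ∈ Finset.range (n + 1), lam ^ (n - k) • δ k‖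
      ≤ (L : ℝ) * D + (n + 1 : ℝ) * E' :=
  accumulation_root_of_neg_one_general L lam hlam δ D E' hδ hdiff
end

section
/- Let A be an s×s complex matrix that is diagonalizable with all eigenvalues real and strictly positive (i.e., A = P D P⁻¹ with P invertible and D diagonal with positive real diagonal entries), and let J be an m×m complex matrix that is diagonalizable with all eigenvalues having nonpositive real part (J = Q Λ Q⁻¹ with Λ diagonal and Re Λ_{jj} ≤ 0). Then there exists a constant C, independent of h, such that for every h ≥ 0 the matrix S := I_{sm} − h·(A ⊗ J) is invertible and ‖S⁻¹‖ ≤ C, where ⊗ denotes the Kronecker product and ‖·‖ the L²-operator norm. -/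
open scoped Matrix.Norms.L2Operator Kronecker

open Matrix

/-!
Conjugation by `P ⊗ Q` diagonalizes `A ⊗ J` and hence also `S = I − h (A ⊗ J)`, whose diagonal
form has entries `1 − h dᵢ μⱼ`. As `h dᵢ ≥ 0` and `Re μⱼ ≤ 0`, these have real part at least `1`,
so the inverse of the diagonal factor has L²-operator norm at most `1`, and
`‖S⁻¹‖ ≤ ‖P ⊗ Q‖ ‖(P ⊗ Q)⁻¹‖` for every `h ≥ 0`.
-/

lemma Complex.one_le_norm_one_sub {z : ℂ} (hz : z.re ≤ 0) : 1 ≤ ‖1 - z‖ :=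
  calc (1 : ℝ) ≤ (1 - z).re := by rw [Complex.sub_re, Complex.one_re]; linarith
    _ ≤ ‖1 - z‖ := Complex.re_le_norm _

namespace Matrix

variable {l n : Type*} [Fintype l] [DecidableEq l] [Fintype n] [DecidableEq n]

lemma inv_diagonal_of_ne_zero {K : Type*} [Field K] {w : n → K} (hw : ∀ i, w i ≠ 0) :
    (diagonal w)⁻¹ = diagonal fun i => (w i)⁻¹ := by
  refine inv_eq_right_inv ?_
  rw [diagonal_mul_diagonal, ← diagonal_one]
  exact congrArg diagonal (funext fun i => mul_inv_cancel₀ (hw i))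

lemma inv_conj {α : Type*} [CommRing α] {U : Matrix n n α} (hU : IsUnit U) (M : Matrix n n α) :
    (U * M * U⁻¹)⁻¹ = U * M⁻¹ * U⁻¹ := by
  rw [mul_inv_rev, mul_inv_rev, nonsing_inv_nonsing_inv _ ((isUnit_iff_isUnit_det U).mp hU),
    Matrix.mul_assoc]

lemma one_sub_smul_conj {α : Type*} [CommRing α] {U : Matrix n n α} (hU : IsUnit U) (c : α)
    (M : Matrix n n α) : 1 - c • (U * M * U⁻¹) = U * (1 - c • M) * U⁻¹ := by
  rw [Matrix.mul_sub, Matrix.sub_mul, Matrix.mul_one,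
    mul_nonsing_inv _ ((isUnit_iff_isUnit_det U).mp hU), Matrix.mul_smul, Matrix.smul_mul]

lemma kronecker_conj {α : Type*} [CommRing α] (P D : Matrix l l α) (Q E : Matrix n n α) :
    (P * D * P⁻¹) ⊗ₖ (Q * E * Q⁻¹) = (P ⊗ₖ Q) * (D ⊗ₖ E) * (P ⊗ₖ Q)⁻¹ := by
  rw [mul_kronecker_mul, mul_kronecker_mul, inv_kronecker]

section L2

variable {𝕜 : Type*} [RCLike 𝕜]

lemma l2_opNorm_inv_diagonal_le_one {w : n → 𝕜} (hw : ∀ i, 1 ≤ ‖w i‖) :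
    ‖(diagonal w)⁻¹‖ ≤ 1 := by
  have hw0 : ∀ i, w i ≠ 0 := fun i => norm_pos_iff.mp (one_pos.trans_le (hw i))
  rw [inv_diagonal_of_ne_zero hw0, l2_opNorm_diagonal]
  refine (pi_norm_le_iff_of_nonneg zero_le_one).mpr fun i => ?_
  rw [norm_inv]
  exact inv_le_one_of_one_le₀ (hw i)

lemma isUnit_conj_diagonal_and_l2_opNorm_inv_le {U : Matrix n n 𝕜} (hU : IsUnit U) {w : n → 𝕜}
    (hw : ∀ i, 1 ≤ ‖w i‖) :
    IsUnit (U * diagonal w * U⁻¹) ∧ ‖(U * diagonal w * U⁻¹)⁻¹‖ ≤ ‖U‖ * ‖U⁻¹‖ := by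
  have hD : IsUnit (diagonal w) :=
    isUnit_diagonal.mpr <| Pi.isUnit_iff.mpr fun i =>
      (norm_pos_iff.mp (one_pos.trans_le (hw i))).isUnit
  refine ⟨(hU.mul hD).mul (isUnit_nonsing_inv_iff.mpr hU), ?_⟩
  rw [inv_conj hU]
  calc ‖U * (diagonal w)⁻¹ * U⁻¹‖ ≤ ‖U‖ * ‖(diagonal w)⁻¹‖ * ‖U⁻¹‖ := norm_mul₃_le
    _ ≤ ‖U‖ * 1 * ‖U⁻¹‖ := by gcongr; exact l2_opNorm_inv_diagonal_le_one hw
    _ = ‖U‖ * ‖U⁻¹‖ := by rw [mul_one]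

end L2

end Matrix

/-- **Uniform resolvent bound for `I − h (A ⊗ J)`.**
If `A = P D P⁻¹` is diagonalizable with strictly positive real eigenvalues and
`J = Q Λ Q⁻¹` is diagonalizable with eigenvalues of nonpositive real part, then there is a
constant `C`, independent of `h`, such that for every `h ≥ 0` the matrix
`S = I − h (A ⊗ J)` is invertible with `‖S⁻¹‖ ≤ C` (L²-operator norm). -/
theorem uniform_resolvent_bound_kronecker
    {s m : ℕ}
    (A P : Matrix (Fin s) (Fin s) ℂ) (hP : IsUnit P)
    (d : Fin s → ℝ) (hd : ∀ i, 0 < d i)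
    (hA : A = P * Matrix.diagonal (fun i => (d i : ℂ)) * P⁻¹)
    (J Q : Matrix (Fin m) (Fin m) ℂ) (hQ : IsUnit Q)
    (μ : Fin m → ℂ) (hμ : ∀ j, (μ j).re ≤ 0)
    (hJ : J = Q * Matrix.diagonal μ * Q⁻¹) :
    ∃ C : ℝ, ∀ h : ℝ, 0 ≤ h →
      IsUnit ((1 : Matrix (Fin s × Fin m) (Fin s × Fin m) ℂ) - (h : ℂ) • (A ⊗ₖ J)) ∧
      ‖((1 : Matrix (Fin s × Fin m) (Fin s × Fin m) ℂ) - (h : ℂ) • (A ⊗ₖ J))⁻¹‖ ≤ C := by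
  have hPQ : IsUnit (P ⊗ₖ Q) := hP.kronecker hQ
  refine ⟨‖P ⊗ₖ Q‖ * ‖(P ⊗ₖ Q)⁻¹‖, fun h hh => ?_⟩
  have hS : (1 : Matrix (Fin s × Fin m) (Fin s × Fin m) ℂ) - (h : ℂ) • (A ⊗ₖ J) =
      (P ⊗ₖ Q) * diagonal (fun p => 1 - h * (d p.1 * μ p.2)) * (P ⊗ₖ Q)⁻¹ := by
    rw [hA, hJ, kronecker_conj, one_sub_smul_conj hPQ, diagonal_kronecker_diagonal,
      ← diagonal_one, ← diagonal_smul, ← diagonal_sub]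
    rfl
  rw [hS]
  refine isUnit_conj_diagonal_and_l2_opNorm_inv_le hPQ fun p => Complex.one_le_norm_one_sub ?_
  rw [← mul_assoc, ← Complex.ofReal_mul, Complex.re_ofReal_mul]
  exact mul_nonpos_of_nonneg_of_nonpos (mul_nonneg hh (hd p.1).le) (hμ p.2)
end

section
/- Let A be an s×s complex matrix that is diagonalizable with all eigenvalues real and strictly positive, and let G be an m×m complex matrix that is diagonalizable with all eigenvalues having real part ≤ −1. Then there exists a constant C, independent of t, such that for every t ≥ 0 the matrix t·I_{sm} − (A ⊗ G) is invertible and ‖(t·I_{sm} − A ⊗ G)⁻¹‖ ≤ C, where ⊗ denotes the Kronecker product and ‖·‖ the L²-operator norm. -/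
open scoped Matrix.Norms.L2Operator Kronecker

/-!
Conjugating by `P ⊗ Q` diagonalizes `t • 1 - A ⊗ G` with diagonal entries `t - d i * μ j`.
Since `t ≥ 0`, `d i > 0` and `Re (μ j) ≤ -1`, these satisfy `|t - d i * μ j| ≥ t + d i ≥ d i`,
so the inverse of the diagonal factor has norm at most `max i, (d i)⁻¹`, whatever `t` is.
-/

open Matrix

theorem Complex.add_le_norm_ofReal_sub_ofReal_mul {t a : ℝ} (ha : 0 ≤ a) {z : ℂ}
    (hz : z.re ≤ -1) : t + a ≤ ‖(t : ℂ) - a * z‖ :=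
  calc t + a ≤ ((t : ℂ) - a * z).re := by simp only [sub_re, ofReal_re, re_ofReal_mul]; nlinarith
    _ ≤ ‖(t : ℂ) - a * z‖ := re_le_norm _

namespace Matrix

theorem kronecker_conj_diagonal {l n α : Type*} [Fintype l] [DecidableEq l] [Fintype n]
    [DecidableEq n] [CommRing α] (P : Matrix l l α) (Q : Matrix n n α) (a : l → α) (b : n → α) :
    (P * diagonal a * P⁻¹) ⊗ₖ (Q * diagonal b * Q⁻¹) =
      (P ⊗ₖ Q) * diagonal (fun p => a p.1 * b p.2) * (P ⊗ₖ Q)⁻¹ := by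
  rw [mul_kronecker_mul, mul_kronecker_mul, diagonal_kronecker_diagonal, inv_kronecker]

variable {n : Type*} [Fintype n] [DecidableEq n]

theorem smul_one_sub_conj {α : Type*} [CommRing α] {R : Matrix n n α} (hR : IsUnit R) (t : α)
    (D : Matrix n n α) : t • 1 - R * D * R⁻¹ = R * (t • 1 - D) * R⁻¹ := by
  rw [Matrix.mul_sub, Matrix.sub_mul, Matrix.mul_smul, Matrix.smul_mul, Matrix.mul_one,
    mul_nonsing_inv _ ((isUnit_iff_isUnit_det R).mp hR)]

theorem isUnit_conj {α : Type*} [CommRing α] {R D : Matrix n n α} (hR : IsUnit R)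
    (hD : IsUnit D) : IsUnit (R * D * R⁻¹) :=
  (hR.mul hD).mul (isUnit_nonsing_inv_iff.mpr hR)

theorem inv_conj_diagonal {K : Type*} [Field K] {R : Matrix n n K} (hR : IsUnit R) {w : n → K}
    (hw : ∀ i, w i ≠ 0) : (R * diagonal w * R⁻¹)⁻¹ = R * diagonal w⁻¹ * R⁻¹ := by
  have hR' := (isUnit_iff_isUnit_det R).mp hR
  have hww : diagonal w * diagonal w⁻¹ = 1 := by
    rw [diagonal_mul_diagonal, ← diagonal_one]
    exact congrArg diagonal (funext fun i => mul_inv_cancel₀ (hw i))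
  refine inv_eq_right_inv ?_
  simp only [Matrix.mul_assoc, nonsing_inv_mul_cancel_left _ _ hR']
  rw [← Matrix.mul_assoc (diagonal w), hww, Matrix.one_mul, mul_nonsing_inv _ hR']

variable {𝕜 : Type*} [RCLike 𝕜]

theorem l2_opNorm_diagonal_le {v : n → 𝕜} {c : ℝ} (hc : 0 ≤ c) (hv : ∀ i, ‖v i‖ ≤ c) :
    ‖diagonal v‖ ≤ c := by
  rw [l2_opNorm_diagonal]
  exact (pi_norm_le_iff_of_nonneg hc).2 hv

theorem l2_opNorm_inv_conj_diagonal_le {R : Matrix n n 𝕜} (hR : IsUnit R) {w : n → 𝕜}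
    (hw : ∀ i, w i ≠ 0) {c : ℝ} (hc : 0 ≤ c) (hwc : ∀ i, ‖(w i)⁻¹‖ ≤ c) :
    ‖(R * diagonal w * R⁻¹)⁻¹‖ ≤ ‖R‖ * c * ‖R⁻¹‖ := by
  rw [inv_conj_diagonal hR hw]
  calc ‖R * diagonal w⁻¹ * R⁻¹‖ ≤ ‖R‖ * ‖diagonal w⁻¹‖ * ‖R⁻¹‖ :=
        (l2_opNorm_mul _ _).trans (by gcongr; exact l2_opNorm_mul _ _)
    _ ≤ ‖R‖ * c * ‖R⁻¹‖ := by gcongr; exact l2_opNorm_diagonal_le hc hwc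

end Matrix

/-- **Uniform resolvent bound for `t·I − A ⊗ G`.**
If `A` is diagonalizable with strictly positive real eigenvalues and `G` is diagonalizable with
all eigenvalues of real part `≤ −1`, then there is a constant `C`, independent of `t`, such that
for every `t ≥ 0` the matrix `t·I − A ⊗ G` is invertible with `‖(t·I − A ⊗ G)⁻¹‖ ≤ C`
(L²-operator norm). -/
theorem uniform_resolvent_bound_shifted_kronecker
    {s m : ℕ}
    (A P : Matrix (Fin s) (Fin s) ℂ) (hP : IsUnit P)
    (d : Fin s → ℝ) (hd : ∀ i, 0 < d i)
    (hA : A = P * Matrix.diagonal (fun i => (d i : ℂ)) * P⁻¹)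
    (G Q : Matrix (Fin m) (Fin m) ℂ) (hQ : IsUnit Q)
    (μ : Fin m → ℂ) (hμ : ∀ j, (μ j).re ≤ -1)
    (hG : G = Q * Matrix.diagonal μ * Q⁻¹) :
    ∃ C : ℝ, ∀ t : ℝ, 0 ≤ t →
      IsUnit ((t : ℂ) • (1 : Matrix (Fin s × Fin m) (Fin s × Fin m) ℂ) - A ⊗ₖ G) ∧
      ‖((t : ℂ) • (1 : Matrix (Fin s × Fin m) (Fin s × Fin m) ℂ) - A ⊗ₖ G)⁻¹‖ ≤ C := by
  have hR : IsUnit (P ⊗ₖ Q) := hP.kronecker hQ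
  -- The sum of the `(d i)⁻¹` bounds each of them and needs no case split on `s = 0`.
  refine ⟨‖P ⊗ₖ Q‖ * (∑ i, (d i)⁻¹) * ‖(P ⊗ₖ Q)⁻¹‖, fun t ht => ?_⟩
  have hdiag : ∀ p : Fin s × Fin m, d p.1 ≤ ‖(t : ℂ) - d p.1 * μ p.2‖ := fun p =>
    (le_add_of_nonneg_left ht).trans
      (Complex.add_le_norm_ofReal_sub_ofReal_mul (hd p.1).le (hμ p.2))
  have hne : ∀ p : Fin s × Fin m, (t : ℂ) - d p.1 * μ p.2 ≠ 0 := fun p =>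
    norm_pos_iff.mp ((hd p.1).trans_le (hdiag p))
  rw [hA, hG, kronecker_conj_diagonal, smul_one_sub_conj hR, smul_one_eq_diagonal,
    diagonal_sub]
  have hinv_nonneg : ∀ i ∈ Finset.univ, 0 ≤ (d i)⁻¹ := fun i _ => (inv_pos.mpr (hd i)).le
  refine ⟨isUnit_conj hR (isUnit_diagonal.mpr (Pi.isUnit_iff.mpr fun p => (hne p).isUnit)),
    l2_opNorm_inv_conj_diagonal_le hR hne (Finset.sum_nonneg hinv_nonneg) fun p => ?_⟩
  rw [norm_inv]
  exact (inv_anti₀ (hd p.1) (hdiag p)).trans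
    (Finset.single_le_sum hinv_nonneg (Finset.mem_univ p.1))
end

section
/- Let c ∈ ℝ^s, let w_0, w_1, …, w_q ∈ ℝ^r, and let A ∈ ℝ^{s×s} be invertible, U ∈ ℝ^{s×r}, B ∈ ℝ^{r×s}, V ∈ ℝ^{r×r}. Assume the preconsistency conditions U w_0 = 𝟙_s (the all-ones vector) and V w_0 = w_0, and assume that for every k = 1, …, q the stage-order condition c^{∘k}/k! − A·c^{∘(k−1)}/(k−1)! − U w_k = 0 and the order condition ∑_{ℓ=0}^{k} w_{k−ℓ}/ℓ! − B·c^{∘(k−1)}/(k−1)! − V w_k = 0 hold, where c^{∘k} denotes the componentwise k-th power of c (with c^{∘0} = 𝟙_s). Define M_∞ := V − B A⁻¹ U. Then for every k = 0, 1, …, q: ∑_{ℓ=0}^{k} w_{k−ℓ}/ℓ! − B A⁻¹ c^{∘k}/k! = M_∞ w_k. (For k = 0 this reads w_0 − B A⁻¹ 𝟙_s = M_∞ w_0.) -/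
/-! Substituting the stage-order condition `U w_k = c^{∘k}/k! − A c^{∘(k−1)}/(k−1)!` into
`B A⁻¹ U w_k` cancels `A⁻¹ A`, leaving `B A⁻¹ c^{∘k}/k! − B c^{∘(k−1)}/(k−1)!`; the order
condition for `V w_k` contains the same term `B c^{∘(k−1)}/(k−1)!`, which drops out of
`(V − B A⁻¹ U) w_k`. For `k = 0` the preconsistency conditions play the same role with
`c^{∘(k−1)}` replaced by `0`. -/

namespace Matrix

variable {R m n p : Type*} [CommRing R] [Fintype m] [DecidableEq m] [Fintype n]

theorem sub_mul_nonsing_inv_mul_mulVec_eq {A : Matrix m m R} (hA : IsUnit A.det)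
    {U : Matrix m n R} {B : Matrix p m R} {V : Matrix p n R} {w : n → R} {x y : m → R}
    {z : p → R} (hU : U *ᵥ w = x - A *ᵥ y) (hV : V *ᵥ w = z - B *ᵥ y) :
    (V - B * A⁻¹ * U) *ᵥ w = z - (B * A⁻¹) *ᵥ x := by
  have hBA : B * A⁻¹ * A = B := by rw [Matrix.mul_assoc, nonsing_inv_mul A hA, Matrix.mul_one]
  rw [sub_mulVec, hV, ← mulVec_mulVec, hU, mulVec_sub, mulVec_mulVec, hBA]
  abel

end Matrix

/-- **Derived order-condition identities for the stability matrix at infinity.**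
Given GLM coefficients `(A, U, B, V)` with `A` invertible, abscissae `c`, and Nordsieck weights
`w_0, …, w_q` satisfying preconsistency and the order/stage-order conditions up to `q`, one has
for every `k = 0, …, q`:
`∑_{ℓ=0}^{k} w_{k−ℓ}/ℓ! − B A⁻¹ c^{∘k}/k! = (V − B A⁻¹ U) w_k`. -/
theorem glm_order_conditions_infinity_identity
    {s r : ℕ} (q : ℕ)
    (c : Fin s → ℝ) (w : ℕ → Fin r → ℝ)
    (A : Matrix (Fin s) (Fin s) ℝ) (hA : IsUnit A.det)
    (U : Matrix (Fin s) (Fin r) ℝ) (B : Matrix (Fin r) (Fin s) ℝ)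
    (V : Matrix (Fin r) (Fin r) ℝ)
    (hpre1 : U.mulVec (w 0) = fun _ => 1)
    (hpre2 : V.mulVec (w 0) = w 0)
    (hstage : ∀ k, 1 ≤ k → k ≤ q →
      (fun i => c i ^ k / (Nat.factorial k : ℝ))
        - A.mulVec (fun i => c i ^ (k - 1) / (Nat.factorial (k - 1) : ℝ))
        - U.mulVec (w k) = 0)
    (horder : ∀ k, 1 ≤ k → k ≤ q →
      (∑ ℓ ∈ Finset.range (k + 1), (1 / (Nat.factorial ℓ : ℝ)) • w (k - ℓ))
        - B.mulVec (fun i => c i ^ (k - 1) / (Nat.factorial (k - 1) : ℝ))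
        - V.mulVec (w k) = 0) :
    ∀ k, k ≤ q →
      (∑ ℓ ∈ Finset.range (k + 1), (1 / (Nat.factorial ℓ : ℝ)) • w (k - ℓ))
        - (B * A⁻¹).mulVec (fun i => c i ^ k / (Nat.factorial k : ℝ))
      = (V - B * A⁻¹ * U).mulVec (w k) := by
  intro k hk
  rcases Nat.eq_zero_or_pos k with rfl | hk1
  · refine (Matrix.sub_mul_nonsing_inv_mul_mulVec_eq hA (y := 0) ?_ ?_).symm
    · simp [hpre1]
    · simp [hpre2]
  · exact (Matrix.sub_mul_nonsing_inv_mul_mulVec_eq hA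
      (sub_eq_zero.mp (hstage k hk1 hk)).symm (sub_eq_zero.mp (horder k hk1 hk)).symm).symm
end

section
/- Let q ≥ 0 be an integer, m, r, s ≥ 1, and let w_0, …, w_q ∈ ℝ^r, c ∈ ℝ^s with components c_i ∈ [0,1], M_∞ ∈ ℝ^{r×r} and D ∈ ℝ^{r×s} be such that for all k = 0, …, q: ∑_{ℓ=0}^{k} w_{k−ℓ}/ℓ! − D·c^{∘k}/k! = M_∞ w_k, where c^{∘k} is the componentwise k-th power (c^{∘0} = 𝟙_s). Let z : ℝ → ℝ^m be (q+1)-times continuously differentiable on [t_0, t_F] with ‖z^{(q+1)}‖ bounded by a constant on [t_0, t_F]. Then there exists C > 0 such that for all h ∈ (0, t_F − t_0] and all t ∈ [t_0, t_F − h], the vector in (ℝ^m)^r whose i-th block is ∑_{k=0}^{q} (w_k)_i h^k z^{(k)}(t+h) − ∑_{j=1}^{r} (M_∞)_{ij} ∑_{k=0}^{q} (w_k)_j h^k z^{(k)}(t) − ∑_{j=1}^{s} D_{ij} z(t + c_j h) has Euclidean norm at most C·h^{q+1}. -/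
open Set Finset
open scoped Nat

/-!
Expand every term of the residual around `t` by Taylor's theorem: the `n`-th derivative at
`t + h` to order `q - n`, the stage value `z (t + c j * h)` to order `q`. The coefficient of
`h ^ k • z⁽ᵏ⁾ t` in the resulting polynomial part is exactly the `k`-th order condition, so that
part cancels and the residual is a fixed linear combination of Lagrange remainders, each of size
`Cz * h ^ (q + 1)`.
-/

section IteratedDerivWithin

variable {𝕜 F : Type*} [NontriviallyNormedField 𝕜] [NormedAddCommGroup F] [NormedSpace 𝕜 F]
  {f : 𝕜 → F} {s t : Set 𝕜}

theorem iteratedDerivWithin_iteratedDerivWithin (m n : ℕ) :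
    iteratedDerivWithin m (iteratedDerivWithin n f s) s = iteratedDerivWithin (n + m) f s := by
  have iterate : ∀ k (g : 𝕜 → F),
      iteratedDerivWithin k g s = (fun g : 𝕜 → F => derivWithin g s)^[k] g :=
    fun _ _ => funext fun _ => iteratedDerivWithin_eq_iterate
  rw [iterate, iterate, iterate, add_comm, Function.iterate_add_apply]

theorem iteratedDerivWithin_subset {n : ℕ} {x : 𝕜} (st : s ⊆ t) (hs : UniqueDiffOn 𝕜 s)
    (ht : UniqueDiffOn 𝕜 t) (hf : ContDiffOn 𝕜 n f t) (hx : x ∈ s) :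
    iteratedDerivWithin n f s x = iteratedDerivWithin n f t x := by
  simp only [iteratedDerivWithin_eq_iteratedFDerivWithin,
    iteratedFDerivWithin_subset st hs ht hf hx]

theorem ContDiffOn.iteratedDerivWithin {n m : WithTop ℕ∞} {i : ℕ} (hf : ContDiffOn 𝕜 n f s)
    (hs : UniqueDiffOn 𝕜 s) (hmn : m + i ≤ n) :
    ContDiffOn 𝕜 m (iteratedDerivWithin i f s) s := by
  rw [iteratedDerivWithin_eq_equiv_comp]
  exact ContDiffOn.continuousLinearMap_comp
    ((ContinuousMultilinearMap.piFieldEquiv 𝕜 (Fin i) F).symm.toContinuousLinearEquiv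
      |>.toContinuousLinearMap)
    fun x hx => (hf x hx).iteratedFDerivWithin_right hs hmn hx

end IteratedDerivWithin

section Taylor

variable {E : Type*} [NormedAddCommGroup E] [NormedSpace ℝ E]

theorem norm_sub_taylorWithinEval_Icc_le {f : ℝ → E} {a b C t x : ℝ} {n : ℕ}
    (hf : ContDiffOn ℝ (n + 1) f (Icc a b))
    (hC : ∀ y ∈ Icc a b, ‖iteratedDerivWithin (n + 1) f (Icc a b) y‖ ≤ C)
    (hat : a ≤ t) (htb : t < b) (hx : x ∈ Icc t b) :
    ‖f x - taylorWithinEval f n (Icc a b) t x‖ ≤ C * (x - t) ^ (n + 1) / n ! := by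
  have sub : Icc t b ⊆ Icc a b := Icc_subset_Icc_left hat
  have restrict : ∀ k ≤ n + 1, ∀ y ∈ Icc t b,
      iteratedDerivWithin k f (Icc t b) y = iteratedDerivWithin k f (Icc a b) y :=
    fun k hk y hy => iteratedDerivWithin_subset sub (uniqueDiffOn_Icc htb)
      (uniqueDiffOn_Icc (hat.trans_lt htb)) (hf.of_le (mod_cast hk)) hy
  have taylor_eq : taylorWithinEval f n (Icc a b) t x = taylorWithinEval f n (Icc t b) t x := by
    simp only [taylor_within_apply]
    refine sum_congr rfl fun k hk => ?_
    rw [restrict k (mem_range.1 hk).le t (left_mem_Icc.2 htb.le)]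
  rw [taylor_eq]
  refine taylor_mean_remainder_bound htb.le (hf.mono sub) hx fun y hy => ?_
  rw [restrict (n + 1) le_rfl y hy]
  exact hC y (sub hy)

theorem norm_iteratedDerivWithin_sub_taylor_le {f : ℝ → E} {a b C t x : ℝ} {n N : ℕ}
    (hn : n ≤ N) (hf : ContDiffOn ℝ (N + 1) f (Icc a b))
    (hC : ∀ y ∈ Icc a b, ‖iteratedDerivWithin (N + 1) f (Icc a b) y‖ ≤ C)
    (hat : a ≤ t) (htb : t < b) (hx : x ∈ Icc t b) :
    ‖iteratedDerivWithin n f (Icc a b) x - ∑ ℓ ∈ range (N + 1 - n),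
        ((ℓ ! : ℝ)⁻¹ * (x - t) ^ ℓ) • iteratedDerivWithin (n + ℓ) f (Icc a b) t‖
      ≤ C * (x - t) ^ (N + 1 - n) / (N - n) ! := by
  obtain ⟨p, rfl⟩ := Nat.exists_eq_add_of_le hn
  rw [show n + p + 1 - n = p + 1 by omega, Nat.add_sub_cancel_left]
  have hderiv : ContDiffOn ℝ (p + 1) (iteratedDerivWithin n f (Icc a b)) (Icc a b) :=
    hf.iteratedDerivWithin (uniqueDiffOn_Icc (hat.trans_lt htb)) <| by
      push_cast
      rw [add_right_comm, add_comm (p : WithTop ℕ∞)]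
  have hbound := norm_sub_taylorWithinEval_Icc_le hderiv
    (by simpa only [iteratedDerivWithin_iteratedDerivWithin, add_assoc] using hC) hat htb hx
  simpa only [taylor_within_apply, iteratedDerivWithin_iteratedDerivWithin] using hbound

end Taylor

section OrderConditions

def ExternalStageOrderConditions {r s : ℕ} (q : ℕ) (w : ℕ → Fin r → ℝ) (c : Fin s → ℝ)
    (Minf : Matrix (Fin r) (Fin r) ℝ) (D : Matrix (Fin r) (Fin s) ℝ) : Prop :=
  ∀ k ≤ q, (∑ ℓ ∈ range (k + 1), (1 / (ℓ ! : ℝ)) • w (k - ℓ)) - D.mulVec (fun j => c j ^ k / k !)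
    = Minf.mulVec (w k)

variable {E : Type*} [AddCommGroup E] [Module ℝ E]

theorem sum_smul_sum_taylor_shift (N : ℕ) (a : ℕ → ℝ) (h : ℝ) (d : ℕ → E) :
    ∑ n ∈ range N, (a n * h ^ n) •
        ∑ ℓ ∈ range (N - n), ((ℓ ! : ℝ)⁻¹ * h ^ ℓ) • d (n + ℓ)
      = ∑ k ∈ range N, (h ^ k * ∑ ℓ ∈ range (k + 1), (ℓ ! : ℝ)⁻¹ * a (k - ℓ)) • d k := by
  simp_rw [smul_sum, smul_smul]
  rw [← sum_range_diag_flip N fun n ℓ =>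
    (a n * h ^ n * ((ℓ ! : ℝ)⁻¹ * h ^ ℓ)) • d (n + ℓ)]
  refine sum_congr rfl fun k _ => ?_
  rw [mul_sum, sum_smul, ← sum_range_reflect]
  refine sum_congr rfl fun ℓ hℓ => ?_
  have hℓk : ℓ ≤ k := Nat.lt_succ_iff.1 (mem_range.1 hℓ)
  rw [show k + 1 - 1 - ℓ = k - ℓ by omega, Nat.sub_sub_self hℓk, Nat.sub_add_cancel hℓk,
    ← pow_mul_pow_sub h hℓk]
  ring_nf

theorem sum_smul_taylor_eq_of_order_conditions {r s q : ℕ} {w : ℕ → Fin r → ℝ}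
    {c : Fin s → ℝ} {Minf : Matrix (Fin r) (Fin r) ℝ} {D : Matrix (Fin r) (Fin s) ℝ}
    (hid : ExternalStageOrderConditions q w c Minf D)
    (h : ℝ) (d : ℕ → E) (i : Fin r) :
    ∑ n ∈ range (q + 1), (w n i * h ^ n) •
        ∑ ℓ ∈ range (q + 1 - n), ((ℓ ! : ℝ)⁻¹ * h ^ ℓ) • d (n + ℓ)
      = ∑ j, Minf i j • ∑ k ∈ range (q + 1), (w k j * h ^ k) • d k
        + ∑ j, D i j • ∑ k ∈ range (q + 1), ((k ! : ℝ)⁻¹ * (c j * h) ^ k) • d k := by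
  rw [sum_smul_sum_taylor_shift]
  simp_rw [smul_sum, smul_smul]
  rw [sum_comm (s := univ), sum_comm (s := univ), ← sum_add_distrib]
  refine sum_congr rfl fun k hk => ?_
  rw [← sum_smul, ← sum_smul, ← add_smul]
  congr 1
  have hk := congrFun (hid k (Nat.lt_succ_iff.1 (mem_range.1 hk))) i
  simp only [Matrix.mulVec, dotProduct, Pi.sub_apply, Finset.sum_apply, Pi.smul_apply,
    smul_eq_mul, one_div] at hk
  have hM : ∑ j, Minf i j * (w k j * h ^ k) = h ^ k * ∑ j, Minf i j * w k j := by
    rw [mul_sum]; exact sum_congr rfl fun _ _ => by ring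
  have hD : ∑ j, D i j * ((k ! : ℝ)⁻¹ * (c j * h) ^ k)
      = h ^ k * ∑ j, D i j * (c j ^ k / k !) := by
    rw [mul_sum]; exact sum_congr rfl fun _ _ => by ring
  rw [hM, hD, ← mul_add, ← hk, sub_add_cancel]

theorem external_stage_residual_eq_sub_remainders {r s q : ℕ} {w : ℕ → Fin r → ℝ}
    {c : Fin s → ℝ} {Minf : Matrix (Fin r) (Fin r) ℝ} {D : Matrix (Fin r) (Fin s) ℝ}
    (hid : ExternalStageOrderConditions q w c Minf D)
    (h : ℝ) (y d : ℕ → E) (v : Fin s → E) (i : Fin r) :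
    (∑ k ∈ range (q + 1), (w k i * h ^ k) • y k)
        - ∑ j, Minf i j • ∑ k ∈ range (q + 1), (w k j * h ^ k) • d k
        - ∑ j, D i j • v j
      = ∑ n ∈ range (q + 1), (w n i * h ^ n) •
          (y n - ∑ ℓ ∈ range (q + 1 - n), ((ℓ ! : ℝ)⁻¹ * h ^ ℓ) • d (n + ℓ))
        - ∑ j, D i j •
            (v j - ∑ k ∈ range (q + 1), ((k ! : ℝ)⁻¹ * (c j * h) ^ k) • d k) := by
  simp only [smul_sub, sum_sub_distrib, sum_smul_taylor_eq_of_order_conditions hid h d i]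
  abel

end OrderConditions

theorem PiLp.norm_le_sum_norm {ι : Type*} [Fintype ι] {β : ι → Type*}
    [∀ i, SeminormedAddCommGroup (β i)] (x : PiLp 2 β) : ‖x‖ ≤ ∑ i, ‖x i‖ := by
  refine le_of_pow_le_pow_left₀ two_ne_zero (by positivity) ?_
  rw [PiLp.norm_sq_eq_of_L2]
  exact sum_sq_le_sq_sum_of_nonneg fun i _ => norm_nonneg _

theorem norm_external_stage_residual_le {E : Type*} [NormedAddCommGroup E] [NormedSpace ℝ E]
    {r s q : ℕ} {w : ℕ → Fin r → ℝ} {c : Fin s → ℝ}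
    {Minf : Matrix (Fin r) (Fin r) ℝ} {D : Matrix (Fin r) (Fin s) ℝ}
    (hid : ExternalStageOrderConditions q w c Minf D)
    (hc : ∀ j, c j ∈ Icc (0 : ℝ) 1) {t₀ tF Cz : ℝ} {z : ℝ → E}
    (hz : ContDiffOn ℝ (q + 1) z (Icc t₀ tF))
    (hzbound : ∀ t ∈ Icc t₀ tF, ‖iteratedDerivWithin (q + 1) z (Icc t₀ tF) t‖ ≤ Cz)
    {h t : ℝ} (hh : 0 < h) (ht₀ : t₀ ≤ t) (htF : t + h ≤ tF) (i : Fin r) :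
    ‖(∑ k ∈ range (q + 1), (w k i * h ^ k) • iteratedDerivWithin k z (Icc t₀ tF) (t + h))
        - ∑ j, Minf i j • ∑ k ∈ range (q + 1),
            (w k j * h ^ k) • iteratedDerivWithin k z (Icc t₀ tF) t
        - ∑ j, D i j • z (t + c j * h)‖
      ≤ Cz * (∑ n ∈ range (q + 1), |w n i| + ∑ j, |D i j|) * h ^ (q + 1) := by
  set I := Icc t₀ tF
  have htb : t < tF := by linarith
  have hCz : 0 ≤ Cz := (norm_nonneg _).trans (hzbound t ⟨ht₀, htb.le⟩)
  have hw : ∀ n ∈ range (q + 1), ‖(w n i * h ^ n) • (iteratedDerivWithin n z I (t + h)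
      - ∑ ℓ ∈ range (q + 1 - n), ((ℓ ! : ℝ)⁻¹ * h ^ ℓ) • iteratedDerivWithin (n + ℓ) z I t)‖
        ≤ |w n i| * (Cz * h ^ (q + 1)) := by
    intro n hn
    have hnq := Nat.lt_succ_iff.1 (mem_range.1 hn)
    have hR := norm_iteratedDerivWithin_sub_taylor_le hnq hz hzbound ht₀ htb ⟨by linarith, htF⟩
    rw [add_sub_cancel_left] at hR
    rw [norm_smul, norm_mul, norm_pow, Real.norm_eq_abs, Real.norm_of_nonneg hh.le, mul_assoc,
      ← pow_mul_pow_sub h (Nat.le_succ_of_le hnq), mul_left_comm Cz]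
    gcongr
    exact hR.trans
      (div_le_self (mul_nonneg hCz (pow_nonneg hh.le _)) (mod_cast (q - n).factorial_pos))
  have hD : ∀ j, ‖D i j • (z (t + c j * h) - ∑ k ∈ range (q + 1),
      ((k ! : ℝ)⁻¹ * (c j * h) ^ k) • iteratedDerivWithin k z I t)‖
        ≤ |D i j| * (Cz * h ^ (q + 1)) := by
    intro j
    have hch₀ : 0 ≤ c j * h := mul_nonneg (hc j).1 hh.le
    have hch : c j * h ≤ h := mul_le_of_le_one_left hh.le (hc j).2
    have hR := norm_sub_taylorWithinEval_Icc_le (x := t + c j * h) hz hzbound ht₀ htb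
      ⟨le_add_of_nonneg_right hch₀, by linarith⟩
    rw [taylor_within_apply, add_sub_cancel_left] at hR
    rw [norm_smul, Real.norm_eq_abs]
    gcongr
    refine hR.trans ((div_le_self (mul_nonneg hCz (pow_nonneg hch₀ _))
      (mod_cast q.factorial_pos)).trans ?_)
    gcongr
  rw [external_stage_residual_eq_sub_remainders hid]
  calc _ ≤ _ := norm_sub_le _ _
    _ ≤ ∑ n ∈ range (q + 1), |w n i| * (Cz * h ^ (q + 1))
          + ∑ j, |D i j| * (Cz * h ^ (q + 1)) :=
        add_le_add ((norm_sum_le _ _).trans (sum_le_sum hw))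
          ((norm_sum_le _ _).trans (sum_le_sum fun j _ => hD j))
    _ = _ := by rw [← sum_mul, ← sum_mul]; ring

theorem external_stage_update_residual_general
    {m r s : ℕ} (q : ℕ)
    (w : ℕ → Fin r → ℝ) (c : Fin s → ℝ) (hc : ∀ j, c j ∈ Set.Icc (0 : ℝ) 1)
    (Minf : Matrix (Fin r) (Fin r) ℝ) (D : Matrix (Fin r) (Fin s) ℝ)
    (hid : ∀ k, k ≤ q →
      (∑ ℓ ∈ Finset.range (k + 1), (1 / (Nat.factorial ℓ : ℝ)) • w (k - ℓ))
        - D.mulVec (fun i => c i ^ k / (Nat.factorial k : ℝ))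
      = Minf.mulVec (w k))
    (t₀ tF : ℝ)
    (z : ℝ → EuclideanSpace ℝ (Fin m))
    (hz : ContDiffOn ℝ (q + 1) z (Set.Icc t₀ tF))
    (Cz : ℝ)
    (hzbound : ∀ t ∈ Set.Icc t₀ tF,
      ‖iteratedDerivWithin (q + 1) z (Set.Icc t₀ tF) t‖ ≤ Cz) :
    ∃ C > 0, ∀ h ∈ Set.Ioc (0 : ℝ) (tF - t₀), ∀ t ∈ Set.Icc t₀ (tF - h),
      ‖(WithLp.equiv 2 (Fin r → EuclideanSpace ℝ (Fin m))).symm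
          (fun i =>
            (∑ k ∈ Finset.range (q + 1),
              (w k i * h ^ k) • iteratedDerivWithin k z (Set.Icc t₀ tF) (t + h))
            - ∑ j : Fin r, Minf i j •
                (∑ k ∈ Finset.range (q + 1),
                  (w k j * h ^ k) • iteratedDerivWithin k z (Set.Icc t₀ tF) t)
            - ∑ j : Fin s, D i j • z (t + c j * h))‖
        ≤ C * h ^ (q + 1) := by
  set K : Fin r → ℝ := fun i => Cz * (∑ n ∈ range (q + 1), |w n i| + ∑ j, |D i j|)
  refine ⟨∑ i, |K i| + 1, by positivity, fun h ⟨hh, _⟩ t ⟨ht₀, ht⟩ => ?_⟩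
  calc _ ≤ _ := PiLp.norm_le_sum_norm _
    _ ≤ ∑ i, K i * h ^ (q + 1) := sum_le_sum fun i _ =>
        norm_external_stage_residual_le hid hc hz hzbound hh ht₀ (by linarith) i
    _ ≤ (∑ i, |K i| + 1) * h ^ (q + 1) := by
        rw [← sum_mul]
        gcongr
        exact (sum_le_sum fun i _ => le_abs_self (K i)).trans (le_add_of_nonneg_right zero_le_one)

/-- **The exact smooth solution satisfies the stiff external-stage update up to `O(h^{q+1})`.**
If the vectors `w_0, …, w_q`, the abscissae `c ∈ [0,1]^s`, and matrices `M_∞`, `D` satisfy the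
identities `∑_{ℓ=0}^{k} w_{k−ℓ}/ℓ! − D c^{∘k}/k! = M_∞ w_k` for `k = 0, …, q`, and
`z : ℝ → ℝ^m` is `(q+1)`-times continuously differentiable on `[t₀, t_F]` with bounded
`(q+1)`-st derivative, then the residual of the external-stage update at the exact solution
is of size `C · h^{q+1}`, uniformly for `h ∈ (0, t_F − t₀]` and `t ∈ [t₀, t_F − h]`. -/
theorem external_stage_update_residual
    {m r s : ℕ} (hm : 1 ≤ m) (hr : 1 ≤ r) (hs : 1 ≤ s) (q : ℕ)
    (w : ℕ → Fin r → ℝ) (c : Fin s → ℝ) (hc : ∀ j, c j ∈ Set.Icc (0 : ℝ) 1)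
    (Minf : Matrix (Fin r) (Fin r) ℝ) (D : Matrix (Fin r) (Fin s) ℝ)
    (hid : ∀ k, k ≤ q →
      (∑ ℓ ∈ Finset.range (k + 1), (1 / (Nat.factorial ℓ : ℝ)) • w (k - ℓ))
        - D.mulVec (fun i => c i ^ k / (Nat.factorial k : ℝ))
      = Minf.mulVec (w k))
    (t₀ tF : ℝ) (ht : t₀ < tF)
    (z : ℝ → EuclideanSpace ℝ (Fin m))
    (hz : ContDiffOn ℝ (q + 1) z (Set.Icc t₀ tF))
    (Cz : ℝ)
    (hzbound : ∀ t ∈ Set.Icc t₀ tF,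
      ‖iteratedDerivWithin (q + 1) z (Set.Icc t₀ tF) t‖ ≤ Cz) :
    ∃ C > 0, ∀ h ∈ Set.Ioc (0 : ℝ) (tF - t₀), ∀ t ∈ Set.Icc t₀ (tF - h),
      ‖(WithLp.equiv 2 (Fin r → EuclideanSpace ℝ (Fin m))).symm
          (fun i =>
            (∑ k ∈ Finset.range (q + 1),
              (w k i * h ^ k) • iteratedDerivWithin k z (Set.Icc t₀ tF) (t + h))
            - ∑ j : Fin r, Minf i j •
                (∑ k ∈ Finset.range (q + 1),
                  (w k j * h ^ k) • iteratedDerivWithin k z (Set.Icc t₀ tF) t)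
            - ∑ j : Fin s, D i j • z (t + c j * h))‖
        ≤ C * h ^ (q + 1) :=
  external_stage_update_residual_general q w c hc Minf D hid t₀ tF z hz Cz hzbound
end

section
/- Let M_∞ ∈ ℝ^{r×r}, m ≥ 1, integers q ≥ 1 and p ∈ {q, q+1}, and constants C, T > 0. Let h ∈ (0, 1] and let (Δz_n)_{n≥0} in (ℝ^m)^r and (δ_n)_{n≥1} satisfy Δz_n = (M_∞ ⊗ I_m)·Δz_{n−1} + δ_n, with ‖Δz_0‖ ≤ C·h^{p}, ‖δ_n‖ ≤ C·h^{q+1} for all n, and ‖δ_n − δ_{n−1}‖ ≤ C·h^{q+2} for all n ≥ 2. Then: (1) if sup_{k≥0} ‖M_∞^k‖ ≤ C, there is a K depending only on C, T, q, p, r such that ‖Δz_n‖ ≤ K·h^{q} for all n with n·h ≤ T; (2) if moreover there is an invertible complex matrix X such that X·M_∞·X⁻¹ is block diagonal with one block a diagonal matrix whose every diagonal entry λ satisfies λ^{L} = −1 for some positive integer L (allowed to depend on the entry), and the other block a matrix of spectral radius strictly less than 1, then there is a K, depending only on C, T, q, p, r, X and the blocks, such that ‖Δz_n‖ ≤ K·h^{min(p,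 q+1)} for all n with n·h ≤ T. -/
/-!
Summation by parts turns the recurrence into
`Δz_n = (M^n ⊗ I) Δz_0 + (S_n ⊗ I) δ_1 + ∑_{k < n-1} (S_{n-1-k} ⊗ I) (δ_{k+2} - δ_{k+1})`
with `S_j = ∑_{i < j} M^i`, so only `‖M^n‖` and the partial sums `‖S_j‖`, `j ≤ n`, enter, paired
with perturbations of size `h^p`, `h^{q+1}` and (`n ≤ T/h` of them) `h^{q+2}`. Power-boundedness
only gives `‖S_j‖ ≤ n C`, which costs a power of `h`. In case (2) the partial sums are uniformly
bounded: on a root `λ` of `-1` they are at most `2 / |λ - 1|`, on the block of spectral radius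
`< 1` the series `∑ ‖N^i‖` converges by Gelfand's formula, and conjugating back by `X` and taking
real parts is a linear map between finite-dimensional spaces, hence bounded.
-/

open scoped Matrix.Norms.L2Operator Kronecker

/-- The linear map on block vectors induced by the Kronecker product `P ⊗ Q`. -/
noncomputable def kronLin {a b m : ℕ} (P : Matrix (Fin a) (Fin b) ℝ)
    (Q : Matrix (Fin m) (Fin m) ℝ) :
    EuclideanSpace ℝ (Fin b × Fin m) →ₗ[ℝ] EuclideanSpace ℝ (Fin a × Fin m) :=
  Matrix.toEuclideanLin (P ⊗ₖ Q)

open Finset Matrix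

theorem kronLin_one_apply {a b m : ℕ} (P : Matrix (Fin a) (Fin b) ℝ)
    (v : EuclideanSpace ℝ (Fin b × Fin m)) (i : Fin a) (j : Fin m) :
    kronLin P 1 v (i, j) = (P *ᵥ fun k => v (k, j)) i := by
  simp [kronLin, mulVec, dotProduct, Fintype.sum_prod_type, one_apply]

theorem norm_kronLin_one_apply_le {a b m : ℕ} (P : Matrix (Fin a) (Fin b) ℝ)
    (v : EuclideanSpace ℝ (Fin b × Fin m)) : ‖kronLin P 1 v‖ ≤ ‖P‖ * ‖v‖ := by
  let col (j : Fin m) : EuclideanSpace ℝ (Fin b) := WithLp.toLp 2 fun k => v (k, j)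
  have norm_sq_eq_sum_cols {c : ℕ} (w : EuclideanSpace ℝ (Fin c × Fin m)) :
      ‖w‖ ^ 2 = ∑ j, ‖(WithLp.toLp 2 fun k => w (k, j) : EuclideanSpace ℝ (Fin c))‖ ^ 2 := by
    simp only [EuclideanSpace.norm_sq_eq, Fintype.sum_prod_type]
    exact sum_comm
  refine le_of_pow_le_pow_left₀ two_ne_zero (by positivity) ?_
  calc ‖kronLin P 1 v‖ ^ 2
      = ∑ j, ‖(EuclideanSpace.equiv (Fin a) ℝ).symm (P *ᵥ (col j).ofLp)‖ ^ 2 := by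
        simp only [norm_sq_eq_sum_cols (kronLin P 1 v), kronLin_one_apply]; rfl
    _ ≤ ∑ j, (‖P‖ * ‖col j‖) ^ 2 := by
        gcongr with j; exact P.l2_opNorm_mulVec (col j)
    _ = (‖P‖ * ‖v‖) ^ 2 := by
        simp only [mul_pow, ← mul_sum, norm_sq_eq_sum_cols v]; rfl

noncomputable def kronLinOneHom (r m : ℕ) :
    Matrix (Fin r) (Fin r) ℝ →+* Module.End ℝ (EuclideanSpace ℝ (Fin r × Fin m)) where
  toFun P := kronLin P 1
  map_one' := by simp [kronLin]; rfl
  map_mul' P Q := by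
    have h := mul_kronecker_mul P Q (1 : Matrix (Fin m) (Fin m) ℝ) (1 : Matrix (Fin m) (Fin m) ℝ)
    rw [Matrix.mul_one] at h
    simp only [kronLin, h, toLpLin_mul_same]; rfl
  map_zero' := by simp [kronLin]
  map_add' P Q := by simp [kronLin, add_kronecker]

theorem kronLin_one_pow {r m : ℕ} (P : Matrix (Fin r) (Fin r) ℝ) (k : ℕ) :
    kronLin P (1 : Matrix (Fin m) (Fin m) ℝ) ^ k = kronLin (P ^ k) 1 :=
  (map_pow (kronLinOneHom r m) P k).symm

theorem kronLin_one_geom_sum {r m : ℕ} (P : Matrix (Fin r) (Fin r) ℝ) (j : ℕ) :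
    ∑ i ∈ range j, kronLin P (1 : Matrix (Fin m) (Fin m) ℝ) ^ i =
      kronLin (∑ i ∈ range j, P ^ i) 1 := by
  simp only [kronLin_one_pow]; exact (map_sum (kronLinOneHom r m) _ _).symm

section Recurrence

variable {R E : Type*} [Ring R]

theorem recurrence_eq_pow_add_geom_sum [AddCommGroup E] [Module R E] (A : Module.End R E)
    {x d : ℕ → E} (hrec : ∀ n, x (n + 1) = A (x n) + d (n + 1)) (n : ℕ) :
    x (n + 1) = (A ^ (n + 1)) (x 0) + (∑ i ∈ range (n + 1), A ^ i) (d 1)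
      + ∑ k ∈ range n, (∑ i ∈ range (n - k), A ^ i) (d (k + 2) - d (k + 1)) := by
  have geom_succ (j : ℕ) (v : E) :
      A ((∑ i ∈ range j, A ^ i) v) = (∑ i ∈ range (j + 1), A ^ i) v - v := by
    rw [geom_sum_succ, LinearMap.add_apply, Module.End.mul_apply, Module.End.one_apply,
      add_sub_cancel_right]
  induction n with
  | zero => simp [hrec 0]
  | succ n ih =>
    have shift : ∀ k ∈ range n, A ((∑ i ∈ range (n - k), A ^ i) (d (k + 2) - d (k + 1)))
        = (∑ i ∈ range (n + 1 - k), A ^ i) (d (k + 2) - d (k + 1)) - (d (k + 2) - d (k + 1)) := by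
      intro k hk
      rw [geom_succ, Nat.sub_add_comm (mem_range.1 hk).le]
    rw [hrec, ih, map_add, map_add, map_sum, sum_congr rfl shift, sum_sub_distrib,
      sum_range_sub (fun k => d (k + 1)), geom_succ, pow_succ' A (n + 1), Module.End.mul_apply,
      sum_range_succ _ n, Nat.add_sub_cancel_left, sum_range_one, pow_zero, Module.End.one_apply]
    abel

theorem norm_le_of_recurrence [SeminormedAddCommGroup E] [Module R E] {A : Module.End R E}
    {x d : ℕ → E} (hrec : ∀ n, 1 ≤ n → x n = A (x (n - 1)) + d n) {C h : ℝ} {p q : ℕ}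
    (hC : 0 ≤ C) (hh : 0 ≤ h) (hx0 : ‖x 0‖ ≤ C * h ^ p)
    (hd : ∀ n, 1 ≤ n → ‖d n‖ ≤ C * h ^ (q + 1))
    (hdd : ∀ n, 2 ≤ n → ‖d n - d (n - 1)‖ ≤ C * h ^ (q + 2))
    {n : ℕ} {a g : ℝ} (ha : 0 ≤ a) (hg : 0 ≤ g) (hpow : ∀ v, ‖(A ^ n) v‖ ≤ a * ‖v‖)
    (hgeom : ∀ j ≤ n, ∀ v, ‖(∑ i ∈ range j, A ^ i) v‖ ≤ g * ‖v‖) :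
    ‖x n‖ ≤ a * (C * h ^ p) + g * (C * h ^ (q + 1)) * (1 + n * h) := by
  have hrest : 0 ≤ g * (C * h ^ (q + 1)) * (1 + n * h) := by positivity
  cases n with
  | zero =>
    calc ‖x 0‖ ≤ a * ‖x 0‖ := by simpa using hpow (x 0)
      _ ≤ a * (C * h ^ p) := by gcongr
      _ ≤ _ := le_add_of_nonneg_right hrest
  | succ n =>
    rw [recurrence_eq_pow_add_geom_sum A (fun n => hrec (n + 1) n.succ_pos) n]
    calc _ ≤ a * ‖x 0‖ + g * ‖d 1‖ + ∑ k ∈ range n, g * ‖d (k + 2) - d (k + 1)‖ := by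
          refine norm_add₃_le.trans (add_le_add_three (hpow _) (hgeom _ le_rfl _) ?_)
          exact (norm_sum_le _ _).trans (sum_le_sum fun k hk => hgeom _ (by omega) _)
      _ ≤ a * (C * h ^ p) + g * (C * h ^ (q + 1)) + ∑ k ∈ range n, g * (C * h ^ (q + 2)) := by
          gcongr with k
          · exact hd 1 le_rfl
          · exact hdd (k + 2) (by omega)
      _ = a * (C * h ^ p) + g * (C * h ^ (q + 1)) * (1 + n * h) := by
          rw [sum_const, card_range, nsmul_eq_mul, pow_succ h (q + 1)]
          ring
      _ ≤ _ := by
          gcongr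
          exact_mod_cast n.le_succ

end Recurrence

theorem norm_le_of_kronLin_recurrence {r m : ℕ} {M : Matrix (Fin r) (Fin r) ℝ}
    {x d : ℕ → EuclideanSpace ℝ (Fin r × Fin m)}
    (hrec : ∀ n, 1 ≤ n → x n = kronLin M 1 (x (n - 1)) + d n) {C h : ℝ} {p q : ℕ}
    (hC : 0 ≤ C) (hh : 0 ≤ h) (hx0 : ‖x 0‖ ≤ C * h ^ p)
    (hd : ∀ n, 1 ≤ n → ‖d n‖ ≤ C * h ^ (q + 1))
    (hdd : ∀ n, 2 ≤ n → ‖d n - d (n - 1)‖ ≤ C * h ^ (q + 2))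
    {n : ℕ} {a g : ℝ} (ha : ‖M ^ n‖ ≤ a) (hg : ∀ j ≤ n, ‖∑ i ∈ range j, M ^ i‖ ≤ g) :
    ‖x n‖ ≤ a * (C * h ^ p) + g * (C * h ^ (q + 1)) * (1 + n * h) := by
  refine norm_le_of_recurrence hrec hC hh hx0 hd hdd ((norm_nonneg _).trans ha)
    ((norm_nonneg _).trans (hg 0 (Nat.zero_le n))) (fun v => ?_) (fun j hj v => ?_)
  · rw [kronLin_one_pow]
    exact (norm_kronLin_one_apply_le _ v).trans (by gcongr)
  · rw [kronLin_one_geom_sum]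
    exact (norm_kronLin_one_apply_le _ v).trans (by gcongr; exact hg j hj)

theorem norm_geom_sum_le_of_norm_pow_le {S : Type*} [SeminormedRing S] {a : S} {C : ℝ}
    (ha : ∀ k, ‖a ^ k‖ ≤ C) (j : ℕ) : ‖∑ i ∈ range j, a ^ i‖ ≤ j * C := by
  calc _ ≤ ∑ i ∈ range j, C := (norm_sum_le _ _).trans (sum_le_sum fun i _ => ha i)
    _ = j * C := by rw [sum_const, card_range, nsmul_eq_mul]

theorem norm_geom_sum_le_of_norm_eq_one {𝕜 : Type*} [NormedDivisionRing 𝕜] {z : 𝕜}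
    (hz : ‖z‖ = 1) (hz1 : z ≠ 1) (j : ℕ) : ‖∑ i ∈ range j, z ^ i‖ ≤ 2 / ‖z - 1‖ := by
  rw [geom_sum_eq hz1, norm_div]
  gcongr
  calc ‖z ^ j - 1‖ ≤ ‖z ^ j‖ + ‖(1 : 𝕜)‖ := norm_sub_le _ _
    _ = 2 := by rw [norm_pow, hz, one_pow, norm_one]; norm_num

theorem exists_norm_geom_sum_le_of_pow_eq_neg_one {ι : Type*} [Fintype ι] {u : ι → ℂ}
    (hu : ∀ t, ∃ L : ℕ, 0 < L ∧ u t ^ L = -1) : ∃ B, ∀ j, ‖∑ i ∈ range j, u ^ i‖ ≤ B := by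
  have norm_eq_one (t : ι) : ‖u t‖ = 1 := by
    obtain ⟨L, hL, hLt⟩ := hu t
    refine (pow_eq_one_iff_of_nonneg (norm_nonneg _) hL.ne').1 ?_
    rw [← norm_pow, hLt, norm_neg, norm_one]
  have ne_one (t : ι) : u t ≠ 1 := by
    obtain ⟨L, -, hLt⟩ := hu t
    rintro h
    rw [h, one_pow] at hLt
    norm_num at hLt
  refine ⟨∑ t, 2 / ‖u t - 1‖, fun j => (pi_norm_le_iff_of_nonneg (by positivity)).2 fun t => ?_⟩
  simp only [Finset.sum_apply, Pi.pow_apply]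
  exact (norm_geom_sum_le_of_norm_eq_one (norm_eq_one t) (ne_one t) j).trans
    (single_le_sum (f := fun t => 2 / ‖u t - 1‖) (fun _ _ => by positivity) (mem_univ t))

theorem summable_norm_pow_of_spectralRadius_lt_one {A : Type*} [NormedRing A]
    [NormedAlgebra ℂ A] [CompleteSpace A] {a : A} (ha : spectralRadius ℂ a < 1) :
    Summable fun n => ‖a ^ n‖ := by
  obtain ⟨c, hρc, hc1⟩ := ENNReal.lt_iff_exists_nnreal_btwn.1 ha
  refine .of_norm_bounded_eventually_nat
    (summable_geometric_of_lt_one c.2 (by exact_mod_cast hc1)) ?_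
  filter_upwards [(spectrum.pow_norm_pow_one_div_tendsto_nhds_spectralRadius a).eventually
    (gt_mem_nhds hρc), Filter.eventually_gt_atTop 0] with n hn hn0
  have hroot : ‖a ^ n‖ ^ (1 / n : ℝ) < c := by
    simpa using (ENNReal.ofReal_lt_iff_lt_toReal (by positivity) ENNReal.coe_ne_top).1 hn
  calc ‖‖a ^ n‖‖ = (‖a ^ n‖ ^ (1 / n : ℝ)) ^ n := by
        rw [norm_norm, ← Real.rpow_natCast, ← Real.rpow_mul (norm_nonneg _),
          one_div_mul_cancel (by positivity), Real.rpow_one]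
    _ ≤ c ^ n := by gcongr

theorem exists_norm_geom_sum_le_of_spectralRadius_lt_one {A : Type*} [NormedRing A]
    [NormedAlgebra ℂ A] [CompleteSpace A] {a : A} (ha : spectralRadius ℂ a < 1) :
    ∃ B, ∀ j, ‖∑ i ∈ range j, a ^ i‖ ≤ B :=
  ⟨∑' i, ‖a ^ i‖, fun _ => (norm_sum_le _ _).trans
    ((summable_norm_pow_of_spectralRadius_lt_one ha).sum_le_tsum _ fun _ _ => norm_nonneg _)⟩

theorem exists_norm_geom_sum_le_of_conj_fromBlocks {n n₁ n₂ : Type*} [Fintype n] [DecidableEq n]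
    [Fintype n₁] [DecidableEq n₁] [Fintype n₂] [DecidableEq n₂] {M : Matrix n n ℝ}
    {e : n ≃ n₁ ⊕ n₂} {u : n₁ → ℂ} {N : Matrix n₂ n₂ ℂ} {X : Matrix n n ℂ} (hX : IsUnit X)
    (hsim : X * M.map Complex.ofReal * X⁻¹ =
      reindex e.symm e.symm (fromBlocks (diagonal u) 0 0 N))
    (hu : ∃ B, ∀ j, ‖∑ i ∈ range j, u ^ i‖ ≤ B) (hN : ∃ B, ∀ j, ‖∑ i ∈ range j, N ^ i‖ ≤ B) :
    ∃ B, ∀ j, ‖∑ i ∈ range j, M ^ i‖ ≤ B := by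
  obtain ⟨U, rfl⟩ := hX
  rw [← coe_units_inv] at hsim
  let blocks : ((n₁ → ℂ) × Matrix n₂ n₂ ℂ) →ₗ[ℂ] Matrix (n₁ ⊕ n₂) (n₁ ⊕ n₂) ℂ :=
    { toFun w := fromBlocks (diagonal w.1) 0 0 w.2
      map_add' v w := by simp [fromBlocks_add]
      map_smul' c w := by simp [fromBlocks_smul] }
  let Φ : ((n₁ → ℂ) × Matrix n₂ n₂ ℂ) →ₗ[ℝ] Matrix n n ℝ :=
    Complex.reLm.mapMatrix ∘ₗ (LinearMap.mulLeft ℂ (U⁻¹ : (Matrix n n ℂ)ˣ).val ∘ₗ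
      LinearMap.mulRight ℂ U.val ∘ₗ (reindexLinearEquiv ℂ ℂ e.symm e.symm).toLinearMap ∘ₗ
      blocks).restrictScalars ℝ
  have hpow (i : ℕ) : M ^ i = Φ (u ^ i, N ^ i) := by
    have hconj : M.map Complex.ofReal =
        (U⁻¹ : (Matrix n n ℂ)ˣ) * reindex e.symm e.symm (fromBlocks (diagonal u) 0 0 N) * U := by
      rw [← hsim]; simp [Matrix.mul_assoc]
    have hmap : (M ^ i).map Complex.ofReal = (M.map Complex.ofReal) ^ i :=
      map_pow (Complex.ofRealHom.mapMatrix) M i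
    calc M ^ i = ((M ^ i).map Complex.ofReal).map Complex.re := by ext; simp
      _ = Φ (u ^ i, N ^ i) := by
        rw [hmap, hconj, Units.conj_pow', ← coe_reindexAlgEquiv ℂ ℂ, ← map_pow,
          fromBlocks_diagonal_pow, diagonal_pow]
        simp [Φ, blocks, Matrix.mul_assoc]
  obtain ⟨Bu, hBu⟩ := hu
  obtain ⟨BN, hBN⟩ := hN
  refine ⟨‖LinearMap.toContinuousLinearMap Φ‖ * max Bu BN, fun j => ?_⟩
  have hsum : ∑ i ∈ range j, M ^ i = Φ (∑ i ∈ range j, u ^ i, ∑ i ∈ range j, N ^ i) := by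
    simp only [hpow, ← map_sum, prod_mk_sum]
  rw [hsum]
  refine ((LinearMap.toContinuousLinearMap Φ).le_opNorm _).trans ?_
  gcongr
  exact (norm_prod_le_iff).2 ⟨(hBu j).trans (le_max_left _ _), (hBN j).trans (le_max_right _ _)⟩

theorem imex_glm_index1_error_propagation_general
    (r q p : ℕ) (hpq : p = q ∨ p = q + 1)
    (C T : ℝ) (hC : 0 < C) (hT : 0 < T)
    (Minf : Matrix (Fin r) (Fin r) ℝ) :
    -- (1) power-bounded case: order `q`
    ((∀ k : ℕ, ‖Minf ^ k‖ ≤ C) →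
      ∃ K > (0 : ℝ), ∀ (m : ℕ), ∀ h ∈ Set.Ioc (0 : ℝ) 1,
        ∀ Δz δ : ℕ → EuclideanSpace ℝ (Fin r × Fin m),
          (∀ n, 1 ≤ n → Δz n = kronLin Minf (1 : Matrix (Fin m) (Fin m) ℝ) (Δz (n - 1)) + δ n) →
          ‖Δz 0‖ ≤ C * h ^ p →
          (∀ n, 1 ≤ n → ‖δ n‖ ≤ C * h ^ (q + 1)) →
          (∀ n, 2 ≤ n → ‖δ n - δ (n - 1)‖ ≤ C * h ^ (q + 2)) →
          ∀ n : ℕ, (n : ℝ) * h ≤ T → ‖Δz n‖ ≤ K * h ^ q) ∧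
    -- (2) roots-of-(−1) plus strictly contractive part: order `min(p, q+1)`
    ((∀ k : ℕ, ‖Minf ^ k‖ ≤ C) →
      ∀ (r₁ r₂ : ℕ) (e : Fin r ≃ (Fin r₁ ⊕ Fin r₂)) (dd : Fin r₁ → ℂ)
        (Nmat : Matrix (Fin r₂) (Fin r₂) ℂ) (X : Matrix (Fin r) (Fin r) ℂ),
        IsUnit X →
        (∀ i, ∃ L : ℕ, 0 < L ∧ dd i ^ L = -1) →
        spectralRadius ℂ Nmat < 1 →
        X * (Minf.map Complex.ofReal) * X⁻¹ =
          Matrix.reindex e.symm e.symm (Matrix.fromBlocks (Matrix.diagonal dd) 0 0 Nmat) →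
        ∃ K > (0 : ℝ), ∀ (m : ℕ), ∀ h ∈ Set.Ioc (0 : ℝ) 1,
          ∀ Δz δ : ℕ → EuclideanSpace ℝ (Fin r × Fin m),
            (∀ n, 1 ≤ n → Δz n = kronLin Minf (1 : Matrix (Fin m) (Fin m) ℝ) (Δz (n - 1)) + δ n) →
            ‖Δz 0‖ ≤ C * h ^ p →
            (∀ n, 1 ≤ n → ‖δ n‖ ≤ C * h ^ (q + 1)) →
            (∀ n, 2 ≤ n → ‖δ n - δ (n - 1)‖ ≤ C * h ^ (q + 2)) →
            ∀ n : ℕ, (n : ℝ) * h ≤ T → ‖Δz n‖ ≤ K * h ^ (min p (q + 1))) := by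
  refine ⟨fun hpow => ⟨C ^ 2 * (1 + T * (1 + T)), by positivity, ?_⟩,
    fun hpow r₁ r₂ e dd Nmat X hX hdd hN hsim => ?_⟩
  · intro m h ⟨hh0, hh1⟩ Δz δ hrec h0 hδ hδδ n hnT
    have hgeom (j : ℕ) (hj : j ≤ n) : ‖∑ i ∈ range j, Minf ^ i‖ ≤ n * C :=
      (norm_geom_sum_le_of_norm_pow_le hpow j).trans (by gcongr)
    have hhp : h ^ p ≤ h ^ q := pow_le_pow_of_le_one hh0.le hh1 (by omega)
    calc ‖Δz n‖ ≤ C * (C * h ^ p) + n * C * (C * h ^ (q + 1)) * (1 + n * h) :=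
          norm_le_of_kronLin_recurrence hrec hC.le hh0.le h0 hδ hδδ (hpow n) hgeom
      _ = C ^ 2 * h ^ p + C ^ 2 * (n * h * (1 + n * h)) * h ^ q := by rw [pow_succ]; ring
      _ ≤ C ^ 2 * h ^ q + C ^ 2 * (T * (1 + T)) * h ^ q := by gcongr
      _ = C ^ 2 * (1 + T * (1 + T)) * h ^ q := by ring
  · obtain ⟨B, hB⟩ := exists_norm_geom_sum_le_of_conj_fromBlocks hX hsim
      (exists_norm_geom_sum_le_of_pow_eq_neg_one hdd)
      (exists_norm_geom_sum_le_of_spectralRadius_lt_one hN)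
    have hB0 : 0 ≤ B := (norm_nonneg _).trans (hB 0)
    refine ⟨C ^ 2 + B * C * (1 + T), by positivity, ?_⟩
    intro m h ⟨hh0, hh1⟩ Δz δ hrec h0 hδ hδδ n hnT
    have hhp : h ^ p ≤ h ^ min p (q + 1) := pow_le_pow_of_le_one hh0.le hh1 (min_le_left _ _)
    have hhq : h ^ (q + 1) ≤ h ^ min p (q + 1) :=
      pow_le_pow_of_le_one hh0.le hh1 (min_le_right _ _)
    calc ‖Δz n‖ ≤ C * (C * h ^ p) + B * (C * h ^ (q + 1)) * (1 + n * h) :=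
          norm_le_of_kronLin_recurrence hrec hC.le hh0.le h0 hδ hδδ (hpow n) fun j _ => hB j
      _ ≤ C * (C * h ^ min p (q + 1)) + B * (C * h ^ min p (q + 1)) * (1 + T) := by gcongr
      _ = (C ^ 2 + B * C * (1 + T)) * h ^ min p (q + 1) := by ring

/-- **Error propagation for the algebraic variables of IMEX GLMs on index-1 DAEs.**
For the recurrence `Δz_n = (M_∞ ⊗ I_m) Δz_{n−1} + δ_n` with `‖Δz_0‖ ≤ C h^p`,
`‖δ_n‖ ≤ C h^{q+1}` and `‖δ_n − δ_{n−1}‖ ≤ C h^{q+2}`: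
(1) if the powers of `M_∞` are bounded by `C` then `‖Δz_n‖ ≤ K h^q` for `n h ≤ T`;
(2) if moreover `M_∞` is similar (via an invertible `X`) to a block diagonal matrix with a
diagonal block whose entries are roots of `−1` and another block of spectral radius `< 1`,
then `‖Δz_n‖ ≤ K h^{min(p, q+1)}` for `n h ≤ T`. -/
theorem imex_glm_index1_error_propagation
    (r q p : ℕ) (hq : 1 ≤ q) (hpq : p = q ∨ p = q + 1)
    (C T : ℝ) (hC : 0 < C) (hT : 0 < T)
    (Minf : Matrix (Fin r) (Fin r) ℝ) :
    -- (1) power-bounded case: order `q`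
    ((∀ k : ℕ, ‖Minf ^ k‖ ≤ C) →
      ∃ K > (0 : ℝ), ∀ (m : ℕ), ∀ h ∈ Set.Ioc (0 : ℝ) 1,
        ∀ Δz δ : ℕ → EuclideanSpace ℝ (Fin r × Fin m),
          (∀ n, 1 ≤ n → Δz n = kronLin Minf (1 : Matrix (Fin m) (Fin m) ℝ) (Δz (n - 1)) + δ n) →
          ‖Δz 0‖ ≤ C * h ^ p →
          (∀ n, 1 ≤ n → ‖δ n‖ ≤ C * h ^ (q + 1)) →
          (∀ n, 2 ≤ n → ‖δ n - δ (n - 1)‖ ≤ C * h ^ (q + 2)) →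
          ∀ n : ℕ, (n : ℝ) * h ≤ T → ‖Δz n‖ ≤ K * h ^ q) ∧
    -- (2) roots-of-(−1) plus strictly contractive part: order `min(p, q+1)`
    ((∀ k : ℕ, ‖Minf ^ k‖ ≤ C) →
      ∀ (r₁ r₂ : ℕ) (e : Fin r ≃ (Fin r₁ ⊕ Fin r₂)) (dd : Fin r₁ → ℂ)
        (Nmat : Matrix (Fin r₂) (Fin r₂) ℂ) (X : Matrix (Fin r) (Fin r) ℂ),
        IsUnit X →
        (∀ i, ∃ L : ℕ, 0 < L ∧ dd i ^ L = -1) →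
        spectralRadius ℂ Nmat < 1 →
        X * (Minf.map Complex.ofReal) * X⁻¹ =
          Matrix.reindex e.symm e.symm (Matrix.fromBlocks (Matrix.diagonal dd) 0 0 Nmat) →
        ∃ K > (0 : ℝ), ∀ (m : ℕ), ∀ h ∈ Set.Ioc (0 : ℝ) 1,
          ∀ Δz δ : ℕ → EuclideanSpace ℝ (Fin r × Fin m),
            (∀ n, 1 ≤ n → Δz n = kronLin Minf (1 : Matrix (Fin m) (Fin m) ℝ) (Δz (n - 1)) + δ n) →
            ‖Δz 0‖ ≤ C * h ^ p →
            (∀ n, 1 ≤ n → ‖δ n‖ ≤ C * h ^ (q + 1)) →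
            (∀ n, 2 ≤ n → ‖δ n - δ (n - 1)‖ ≤ C * h ^ (q + 2)) →
            ∀ n : ℕ, (n : ℝ) * h ≤ T → ‖Δz n‖ ≤ K * h ^ (min p (q + 1))) :=
  imex_glm_index1_error_propagation_general r q p hpq C T hC hT Minf
end

section
/- Let A ∈ ℂ^{s×s}, B ∈ ℂ^{r×s}, U ∈ ℂ^{s×r}, V ∈ ℂ^{r×r}, and let G ∈ ℂ^{m×m} be diagonalizable: G = P·Λ·P⁻¹ with P invertible and Λ diagonal with diagonal entries λ_1, …, λ_m. Assume that for every i the matrix I_s − λ_i·A is invertible. Then I_{sm} − A ⊗ G is invertible, and the spectrum of the matrix M(G) := V ⊗ I_m + (B ⊗ G)·(I_{sm} − A ⊗ G)⁻¹·(U ⊗ I_m) is contained in the union over i = 1, …, m of the spectra of M(λ_i) := V + λ_i·B·(I_s − λ_i·A)⁻¹·U. In particular the spectral radius satisfies ρ(M(G)) ≤ max_{1 ≤ i ≤ m} ρ(M(λ_i)). -/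
/-!
Conjugation by `I ⊗ P` turns every Kronecker factor `X ⊗ G` into `X ⊗ Λ`, so `M(G)` is similar
to `M(Λ)`. Since `Λ` is diagonal, `X ⊗ Λ` is block diagonal with blocks `λ_i X`, and `M(Λ)` is
block diagonal with blocks `M(λ_i)`. Similar matrices have the same spectrum, and the spectrum of
a block-diagonal matrix is the union of the spectra of its blocks.
-/

open scoped Kronecker
open Matrix

namespace Matrix

variable {R : Type*} [CommRing R]

section BlockDiagonal

variable {n o : Type*} [Fintype n] [DecidableEq n] [Fintype o] [DecidableEq o]

theorem isUnit_blockDiagonal_iff {f : o → Matrix n n R} :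
    IsUnit (blockDiagonal f) ↔ ∀ i, IsUnit (f i) := by
  simp only [isUnit_iff_isUnit_det, det_blockDiagonal, IsUnit.prod_univ_iff]

theorem blockDiagonal_inv {f : o → Matrix n n R} (hf : ∀ i, IsUnit (f i)) :
    (blockDiagonal f)⁻¹ = blockDiagonal fun i => (f i)⁻¹ := by
  refine inv_eq_left_inv ?_
  rw [← blockDiagonal_mul, ← blockDiagonal_one]
  congr 1
  funext i
  exact nonsing_inv_mul _ ((isUnit_iff_isUnit_det _).1 (hf i))

theorem algebraMap_sub_blockDiagonal (z : R) (f : o → Matrix n n R) :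
    algebraMap R _ z - blockDiagonal f = blockDiagonal fun i => algebraMap R _ z - f i := by
  simp only [Algebra.algebraMap_eq_smul_one]
  rw [← blockDiagonal_one, ← blockDiagonal_smul, ← blockDiagonal_sub]
  rfl

theorem spectrum_blockDiagonal (f : o → Matrix n n R) :
    spectrum R (blockDiagonal f) = ⋃ i, spectrum R (f i) := by
  ext z
  simp [spectrum.mem_iff, algebraMap_sub_blockDiagonal, isUnit_blockDiagonal_iff]

theorem spectralRadius_blockDiagonal {𝕜 : Type*} [NormedField 𝕜] (f : o → Matrix n n 𝕜) :
    spectralRadius 𝕜 (blockDiagonal f) = ⨆ i, spectralRadius 𝕜 (f i) := by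
  simp only [spectralRadius, spectrum_blockDiagonal, iSup_iUnion]

end BlockDiagonal

theorem inv_units_conj {n : Type*} [Fintype n] [DecidableEq n] (u : (Matrix n n R)ˣ)
    (X : Matrix n n R) : (u.val * X * u⁻¹.val)⁻¹ = u.val * X⁻¹ * u⁻¹.val := by
  rw [mul_inv_rev, mul_inv_rev, ← coe_units_inv, ← coe_units_inv, inv_inv, mul_assoc]

theorem units_inv_mul_cancel_left {n k : Type*} [Fintype n] [DecidableEq n] (u : (Matrix n n R)ˣ)
    (Y : Matrix n k R) : u⁻¹.val * (u.val * Y) = Y := by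
  rw [← Matrix.mul_assoc, u.inv_mul, Matrix.one_mul]

section Kronecker

variable {l m n n' n'' p : Type*}

theorem one_kronecker_mul_kronecker_mul_one_kronecker [Fintype l] [DecidableEq l] [Fintype m]
    [DecidableEq m] [Fintype n'] [Fintype n''] (X : Matrix l m R) (P : Matrix n n' R)
    (Y : Matrix n' n'' R) (Q : Matrix n'' p R) :
    ((1 : Matrix l l R) ⊗ₖ P) * (X ⊗ₖ Y) * ((1 : Matrix m m R) ⊗ₖ Q) = X ⊗ₖ (P * Y * Q) := by
  rw [← mul_kronecker_mul, ← mul_kronecker_mul, Matrix.one_mul, Matrix.mul_one]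

theorem one_sub_kronecker_diagonal [DecidableEq l] [DecidableEq n] (A : Matrix l l R)
    (d : n → R) :
    1 - A ⊗ₖ diagonal d = blockDiagonal fun i => 1 - d i • A := by
  rw [kronecker_diagonal, ← blockDiagonal_one, ← blockDiagonal_sub]
  simp only [op_smul_eq_smul]
  rfl

variable [Fintype n] [DecidableEq n]

def oneKroneckerHom (l : Type*) [Fintype l] [DecidableEq l] :
    Matrix n n R →* Matrix (l × n) (l × n) R where
  toFun P := 1 ⊗ₖ P
  map_one' := one_kronecker_one
  map_mul' P Q := by rw [← mul_kronecker_mul, one_mul]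

variable [Fintype l] [DecidableEq l] [Fintype m] [DecidableEq m]

theorem kronecker_units_conj (X : Matrix l m R) (u : (Matrix n n R)ˣ) (Y : Matrix n n R) :
    X ⊗ₖ (u.val * Y * u⁻¹.val) =
      (Units.map (oneKroneckerHom l) u).val * (X ⊗ₖ Y) *
        (Units.map (oneKroneckerHom m) u)⁻¹.val :=
  (one_kronecker_mul_kronecker_mul_one_kronecker X _ Y _).symm

theorem one_sub_kronecker_units_conj (A : Matrix l l R) (u : (Matrix n n R)ˣ)
    (G : Matrix n n R) :
    1 - A ⊗ₖ (u.val * G * u⁻¹.val) =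
      (Units.map (oneKroneckerHom l) u).val * (1 - A ⊗ₖ G) *
        (Units.map (oneKroneckerHom l) u)⁻¹.val := by
  rw [kronecker_units_conj, mul_sub, sub_mul, mul_one, Units.mul_inv]

end Kronecker

end Matrix

section StabilityMatrix

variable {R : Type*} [CommRing R] {s r n : Type*} [Fintype s] [DecidableEq s] [Fintype n]
  [DecidableEq n]
  (A : Matrix s s R) (B : Matrix r s R) (U : Matrix s r R) (V : Matrix r r R)

noncomputable def stabilityMatrix (G : Matrix n n R) : Matrix (r × n) (r × n) R :=
  V ⊗ₖ (1 : Matrix n n R) + (B ⊗ₖ G) * (1 - A ⊗ₖ G)⁻¹ * (U ⊗ₖ (1 : Matrix n n R))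

theorem stabilityMatrix_units_conj [Fintype r] [DecidableEq r] (u : (Matrix n n R)ˣ)
    (G : Matrix n n R) :
    stabilityMatrix A B U V (u.val * G * u⁻¹.val) =
      (Units.map (oneKroneckerHom r) u).val * stabilityMatrix A B U V G *
        (Units.map (oneKroneckerHom r) u)⁻¹.val := by
  have hV : V ⊗ₖ (1 : Matrix n n R) =
      (Units.map (oneKroneckerHom r) u).val * (V ⊗ₖ (1 : Matrix n n R)) *
        (Units.map (oneKroneckerHom r) u)⁻¹.val := by
    simpa using kronecker_units_conj V u 1
  have hU : U ⊗ₖ (1 : Matrix n n R) =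
      (Units.map (oneKroneckerHom s) u).val * (U ⊗ₖ (1 : Matrix n n R)) *
        (Units.map (oneKroneckerHom r) u)⁻¹.val := by
    simpa using kronecker_units_conj U u 1
  conv_lhs => rw [stabilityMatrix, one_sub_kronecker_units_conj, inv_units_conj,
    kronecker_units_conj B, hU, hV]
  rw [stabilityMatrix]
  simp only [Matrix.mul_add, Matrix.add_mul, Matrix.mul_assoc, units_inv_mul_cancel_left]

theorem stabilityMatrix_diagonal (d : n → R) (hd : ∀ i, IsUnit (1 - d i • A)) :
    stabilityMatrix A B U V (diagonal d) =
      blockDiagonal fun i => V + d i • (B * (1 - d i • A)⁻¹ * U) := by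
  rw [stabilityMatrix, one_sub_kronecker_diagonal, blockDiagonal_inv hd, kronecker_one,
    kronecker_one, kronecker_diagonal, ← blockDiagonal_mul, ← blockDiagonal_mul,
    ← blockDiagonal_add]
  congr 1
  ext1 i
  simp only [Pi.add_apply, op_smul_eq_smul, Matrix.smul_mul]

end StabilityMatrix

theorem spectralRadius_units_conjugate {𝕜 A : Type*} [NormedField 𝕜] [Ring A] [Algebra 𝕜 A]
    (a : A) (u : Aˣ) : spectralRadius 𝕜 (u.val * a * u⁻¹.val) = spectralRadius 𝕜 a := by
  simp only [spectralRadius, spectrum.units_conjugate]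

/-- **Spectral mapping for the GLM stability matrix at a matrix argument.**
If `G = P Λ P⁻¹` is diagonalizable with eigenvalues `λ_1, …, λ_m` and each `I_s − λ_i A` is
invertible, then `I_{sm} − A ⊗ G` is invertible, the spectrum of
`M(G) = V ⊗ I_m + (B ⊗ G)(I_{sm} − A ⊗ G)⁻¹(U ⊗ I_m)` is contained in the union of the spectra
of the matrices `M(λ_i) = V + λ_i B (I_s − λ_i A)⁻¹ U`, and consequently
`ρ(M(G)) ≤ max_i ρ(M(λ_i))`. -/
theorem glm_stability_matrix_spectrum_kronecker
    {s r m : ℕ}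
    (A : Matrix (Fin s) (Fin s) ℂ) (B : Matrix (Fin r) (Fin s) ℂ)
    (U : Matrix (Fin s) (Fin r) ℂ) (V : Matrix (Fin r) (Fin r) ℂ)
    (G P : Matrix (Fin m) (Fin m) ℂ) (hP : IsUnit P) (lam : Fin m → ℂ)
    (hG : G = P * Matrix.diagonal lam * P⁻¹)
    (hA : ∀ i, IsUnit ((1 : Matrix (Fin s) (Fin s) ℂ) - lam i • A)) :
    IsUnit ((1 : Matrix (Fin s × Fin m) (Fin s × Fin m) ℂ) - A ⊗ₖ G) ∧
    spectrum ℂ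
        (V ⊗ₖ (1 : Matrix (Fin m) (Fin m) ℂ)
          + (B ⊗ₖ G) * ((1 : Matrix (Fin s × Fin m) (Fin s × Fin m) ℂ) - A ⊗ₖ G)⁻¹
            * (U ⊗ₖ (1 : Matrix (Fin m) (Fin m) ℂ)))
      ⊆ ⋃ i : Fin m,
          spectrum ℂ
            (V + lam i • (B * ((1 : Matrix (Fin s) (Fin s) ℂ) - lam i • A)⁻¹ * U)) ∧
    spectralRadius ℂ
        (V ⊗ₖ (1 : Matrix (Fin m) (Fin m) ℂ)
          + (B ⊗ₖ G) * ((1 : Matrix (Fin s × Fin m) (Fin s × Fin m) ℂ) - A ⊗ₖ G)⁻¹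
            * (U ⊗ₖ (1 : Matrix (Fin m) (Fin m) ℂ)))
      ≤ ⨆ i : Fin m,
          spectralRadius ℂ
            (V + lam i • (B * ((1 : Matrix (Fin s) (Fin s) ℂ) - lam i • A)⁻¹ * U)) := by
  change _ ∧ spectrum ℂ (stabilityMatrix A B U V G) ⊆ _ ∧
    spectralRadius ℂ (stabilityMatrix A B U V G) ≤ _
  have hGu : G = hP.unit.val * diagonal lam * hP.unit⁻¹.val := by
    rwa [coe_units_inv, IsUnit.unit_spec]
  have hM := stabilityMatrix_units_conj A B U V hP.unit (diagonal lam)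
  rw [stabilityMatrix_diagonal A B U V lam hA, ← hGu] at hM
  refine ⟨?_, ?_, ?_⟩
  · rw [hGu, one_sub_kronecker_units_conj, one_sub_kronecker_diagonal, Units.isUnit_mul_units,
      Units.isUnit_units_mul]
    exact isUnit_blockDiagonal_iff.2 hA
  · rw [hM, spectrum.units_conjugate, spectrum_blockDiagonal]
  · rw [hM, spectralRadius_units_conjugate, spectralRadius_blockDiagonal]
end
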